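/- arXiv:1505.02097 — 2 statements merged into one kernel-verified Lean document; each statement's English description precedes it below -/
import Mathlib

section
/- Let n be even and suppose λ₁ = ... = λ_{n/2} = 1+a and λ_{n/2+1} = ... = λ_n = 1−a for some a > 0. Then the minimum of max(Σᵢ wᵢ², Σᵢ wᵢ²λᵢ²) over all w ∈ ℝⁿ satisfying Σᵢ wᵢ = 0 and Σᵢ wᵢλᵢ = 1 equals (1+a²)/(a²n). -/
/-- With `n = 2m` even, `λᵢ = 1+a` on the first half and `1−a` on the
second half, the minimum of `max(∑ wᵢ², ∑ wᵢ²λᵢ²)` over `w` with `∑ wᵢ = 0` and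
`∑ wᵢλᵢ = 1` equals `(1+a²)/(a²n)`. -/
theorem val_P1_two_point_spectrum (m : ℕ) (hm : 0 < m) (a : ℝ) (ha : 0 < a) (ha1 : a ≤ 1)
    (lam : Fin (2 * m) → ℝ)
    (hlam : ∀ i : Fin (2 * m), lam i = if (i : ℕ) < m then 1 + a else 1 - a) :
    IsLeast
      {t : ℝ | ∃ w : Fin (2 * m) → ℝ,
        (∑ i, w i = 0) ∧ (∑ i, w i * lam i = 1) ∧
        t = max (∑ i, (w i) ^ 2) (∑ i, (w i) ^ 2 * (lam i) ^ 2)}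
      ((1 + a ^ 2) / (a ^ 2 * (2 * m))) := by
  have hmR : (0:ℝ) < (m:ℝ) := by exact_mod_cast hm
  set F1 : Finset (Fin (2*m)) := Finset.univ.filter (fun i => (i : ℕ) < m) with hF1
  set F2 : Finset (Fin (2*m)) := Finset.univ.filter (fun i => ¬ (i : ℕ) < m) with hF2
  have hmem1 : ∀ i ∈ F1, (i : ℕ) < m := fun i hi => (Finset.mem_filter.mp hi).2
  have hmem2 : ∀ i ∈ F2, ¬ (i : ℕ) < m := fun i hi => (Finset.mem_filter.mp hi).2
  have hcard : F1.card = m := by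
    rw [hF1, Finset.card_filter]
    rw [Fin.sum_univ_eq_sum_range (fun i => if i < m then 1 else 0)]
    rw [← Finset.card_filter]
    have : Finset.filter (fun i => i < m) (Finset.range (2 * m)) = Finset.range m := by
      ext i; simp; omega
    rw [this, Finset.card_range]
  have hcard' : F2.card = m := by
    have h := Finset.card_filter_add_card_filter_not
      (s := (Finset.univ : Finset (Fin (2*m)))) (fun i : Fin (2*m) => (i : ℕ) < m)
    simp only [Finset.card_univ, Fintype.card_fin] at h
    rw [← hF1, ← hF2] at h
    omega
  have hsplit : ∀ f : Fin (2 * m) → ℝ,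
      ∑ i, f i = (∑ i ∈ F1, f i) + (∑ i ∈ F2, f i) :=
    fun f => (Finset.sum_filter_add_sum_filter_not Finset.univ _ f).symm
  have hlam1 : ∀ i ∈ F1, lam i = 1 + a := fun i hi => by
    rw [hlam i, if_pos (hmem1 i hi)]
  have hlam2 : ∀ i ∈ F2, lam i = 1 - a := fun i hi => by
    rw [hlam i, if_neg (hmem2 i hi)]
  constructor
  · -- membership
    set c : ℝ := 1 / (2 * m * a) with hc
    refine ⟨fun i => if (i : ℕ) < m then c else -c, ?_, ?_, ?_⟩
    · show (∑ i : Fin (2*m), (if (i : ℕ) < m then c else -c)) = 0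
      rw [hsplit]
      have e1 : ∑ i ∈ F1, (if (i : ℕ) < m then c else -c) = ∑ i ∈ F1, c :=
        Finset.sum_congr rfl fun i hi => if_pos (hmem1 i hi)
      have e2 : ∑ i ∈ F2, (if (i : ℕ) < m then c else -c) = ∑ i ∈ F2, (-c) :=
        Finset.sum_congr rfl fun i hi => if_neg (hmem2 i hi)
      rw [e1, e2, Finset.sum_const, Finset.sum_const, hcard, hcard']
      simp
    · show (∑ i : Fin (2*m), (if (i : ℕ) < m then c else -c) * lam i) = 1
      rw [hsplit]
      have e1 : ∑ i ∈ F1, (if (i : ℕ) < m then c else -c) * lam i = ∑ i ∈ F1, c * (1+a) :=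
        Finset.sum_congr rfl fun i hi => by rw [hlam1 i hi, if_pos (hmem1 i hi)]
      have e2 : ∑ i ∈ F2, (if (i : ℕ) < m then c else -c) * lam i = ∑ i ∈ F2, (-c) * (1-a) :=
        Finset.sum_congr rfl fun i hi => by rw [hlam2 i hi, if_neg (hmem2 i hi)]
      rw [e1, e2, Finset.sum_const, Finset.sum_const, hcard, hcard', nsmul_eq_mul, nsmul_eq_mul, hc]
      field_simp
      ring
    · show (1 + a ^ 2) / (a ^ 2 * (2 * m)) =
        max (∑ i : Fin (2*m), (if (i : ℕ) < m then c else -c) ^ 2)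
            (∑ i : Fin (2*m), (if (i : ℕ) < m then c else -c) ^ 2 * (lam i) ^ 2)
      have hS : (∑ i : Fin (2*m), (if (i : ℕ) < m then c else -c) ^ 2) = 2 * m * c ^ 2 := by
        rw [hsplit]
        have e1 : ∑ i ∈ F1, (if (i : ℕ) < m then c else -c) ^ 2 = ∑ i ∈ F1, c ^ 2 :=
          Finset.sum_congr rfl fun i hi => by rw [if_pos (hmem1 i hi)]
        have e2 : ∑ i ∈ F2, (if (i : ℕ) < m then c else -c) ^ 2 = ∑ i ∈ F2, c ^ 2 :=
          Finset.sum_congr rfl fun i hi => by rw [if_neg (hmem2 i hi)]; ring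
        rw [e1, e2, Finset.sum_const, Finset.sum_const, hcard, hcard', nsmul_eq_mul]
        ring
      have hT : (∑ i : Fin (2*m), (if (i : ℕ) < m then c else -c) ^ 2 * (lam i) ^ 2)
          = m * c ^ 2 * ((1+a)^2 + (1-a)^2) := by
        rw [hsplit]
        have e1 : ∑ i ∈ F1, (if (i : ℕ) < m then c else -c) ^ 2 * (lam i) ^ 2
            = ∑ i ∈ F1, c ^ 2 * (1+a)^2 :=
          Finset.sum_congr rfl fun i hi => by rw [hlam1 i hi, if_pos (hmem1 i hi)]
        have e2 : ∑ i ∈ F2, (if (i : ℕ) < m then c else -c) ^ 2 * (lam i) ^ 2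
            = ∑ i ∈ F2, c ^ 2 * (1-a)^2 :=
          Finset.sum_congr rfl fun i hi => by rw [hlam2 i hi, if_neg (hmem2 i hi)]; ring
        rw [e1, e2, Finset.sum_const, Finset.sum_const, hcard, hcard', nsmul_eq_mul]
        ring
      rw [hS, hT, max_eq_right]
      · rw [hc]; field_simp; ring
      · nlinarith [mul_nonneg (mul_nonneg hmR.le (sq_nonneg c)) (sq_nonneg a)]
  · -- lower bound
    rintro t ⟨w, h0, h1, ht⟩
    rw [hsplit w] at h0
    rw [hsplit (fun i => w i * lam i)] at h1
    set P := ∑ i ∈ F1, w i with hP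
    set Q := ∑ i ∈ F2, w i with hQ
    have h1' : (1+a) * P + (1-a) * Q = 1 := by
      have e1 : ∑ i ∈ F1, w i * lam i = (1+a) * P := by
        rw [hP, Finset.mul_sum]
        exact Finset.sum_congr rfl fun i hi => by rw [hlam1 i hi]; ring
      have e2 : ∑ i ∈ F2, w i * lam i = (1-a) * Q := by
        rw [hQ, Finset.mul_sum]
        exact Finset.sum_congr rfl fun i hi => by rw [hlam2 i hi]; ring
      rw [e1, e2] at h1
      linarith
    have h2aP : 2 * a * P = 1 := by linear_combination h1' + (a - 1) * h0
    have hPv : P = 1 / (2 * a) := by field_simp; linarith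
    have hQv : Q = -(1 / (2 * a)) := by
      have := h0; rw [hPv] at this; linarith
    have hA : 1 / (2*a) ^ 2 ≤ (m:ℝ) * ∑ i ∈ F1, (w i)^2 := by
      have h := sq_sum_le_card_mul_sum_sq (s := F1) (f := w)
      rw [hcard, ← hP] at h
      calc 1 / (2*a)^2 = P ^ 2 := by rw [hPv, div_pow]; norm_num
        _ ≤ _ := h
    have hB : 1 / (2*a) ^ 2 ≤ (m:ℝ) * ∑ i ∈ F2, (w i)^2 := by
      have h := sq_sum_le_card_mul_sum_sq (s := F2) (f := w)
      rw [hcard', ← hQ] at h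
      calc 1 / (2*a)^2 = Q ^ 2 := by rw [hQv, neg_pow, div_pow]; norm_num
        _ ≤ _ := h
    have hTle : (1 + a ^ 2) / (a ^ 2 * (2 * m)) ≤ ∑ i, (w i) ^ 2 * (lam i) ^ 2 := by
      have e : ∑ i, (w i) ^ 2 * (lam i) ^ 2
          = (1+a)^2 * (∑ i ∈ F1, (w i)^2) + (1-a)^2 * (∑ i ∈ F2, (w i)^2) := by
        rw [hsplit (fun i => (w i)^2 * (lam i)^2), Finset.mul_sum, Finset.mul_sum]
        congr 1
        · exact Finset.sum_congr rfl fun i hi => by rw [hlam1 i hi]; ring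
        · exact Finset.sum_congr rfl fun i hi => by rw [hlam2 i hi]; ring
      rw [e]
      set A := ∑ i ∈ F1, (w i)^2
      set B := ∑ i ∈ F2, (w i)^2
      have hA' : 1 / ((2*a)^2 * m) ≤ A := by
        rw [div_le_iff₀ (by positivity)]
        rw [div_le_iff₀ (by positivity)] at hA
        nlinarith
      have hB' : 1 / ((2*a)^2 * m) ≤ B := by
        rw [div_le_iff₀ (by positivity)]
        rw [div_le_iff₀ (by positivity)] at hB
        nlinarith
      have key : (1 + a ^ 2) / (a ^ 2 * (2 * m))
          = (1+a)^2 * (1 / ((2*a)^2 * m)) + (1-a)^2 * (1 / ((2*a)^2 * m)) := by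
        field_simp; ring
      rw [key]
      gcongr <;> positivity
    rw [ht]
    exact le_trans hTle (le_max_right _ _)
end

section
/- For any μ, μ′ ∈ ℝⁿ and σ² > 0, the total variation distance between N(μ, σ²Iₙ) and N(μ′, σ²Iₙ) is at most ‖μ − μ′‖₂ / √(2πσ²). -/
/-!
The likelihood ratio of the two product measures depends on `x` only through the linear
statistic `T x = ∑ i, (μ i - μ' i) * x i`, so by Scheffé's argument the total variation distance
is the difference of the masses of the half-space `S` where the first density dominates. Under
either measure `T` is a real Gaussian of variance `‖μ - μ'‖² σ²`, and the two means differ by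
`‖μ - μ'‖²`, so that difference is the mass of an interval of length `‖μ - μ'‖²` under one such
Gaussian, which is at most its length times the peak density `1 / √(2π ‖μ - μ'‖² σ²)`.
-/

open MeasureTheory ProbabilityTheory
open scoped NNReal

/-- Total variation distance between two measures. -/
noncomputable def tvDist {α : Type*} [MeasurableSpace α] (P₀ P₁ : Measure α) : ℝ :=
  ⨆ A : {A : Set α // MeasurableSet A}, |(P₀ A).toReal - (P₁ A).toReal|

open Real
open scoped ENNReal

namespace MeasureTheory

lemma lintegral_fin_nat_prod_eq_prod {n : ℕ} {E : Type*} {mE : MeasurableSpace E}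
    {μ : Fin n → Measure E} [∀ i, SigmaFinite (μ i)] {f : Fin n → E → ℝ≥0∞}
    (hf : ∀ i, Measurable (f i)) :
    ∫⁻ x, ∏ i, f i (x i) ∂(Measure.pi μ) = ∏ i, ∫⁻ x, f i x ∂(μ i) := by
  induction n with
  | zero => simp
  | succ n ih =>
      calc
        _ = ∫⁻ x : E × (Fin n → E), f 0 x.1 * ∏ i : Fin n, f i.succ (x.2 i)
            ∂((μ 0).prod (Measure.pi fun i ↦ μ i.succ)) := by
          rw [← (measurePreserving_piFinSuccAbove μ 0).symm.lintegral_comp_emb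
            (MeasurableEquiv.measurableEmbedding _)]
          simp_rw [MeasurableEquiv.piFinSuccAbove_symm_apply, Fin.insertNthEquiv,
            Fin.prod_univ_succ, Fin.insertNth_zero, Equiv.coe_fn_mk, Fin.cons_succ,
            Fin.zero_succAbove, cast_eq, Fin.cons_zero]
        _ = (∫⁻ x, f 0 x ∂μ 0) * ∏ i : Fin n, ∫⁻ x, f i.succ x ∂(μ i.succ) := by
          have hprod : Measurable fun y : Fin n → E ↦ ∏ i, f i.succ (y i) :=
            Finset.measurable_prod _ fun i _ ↦ (hf i.succ).comp (measurable_pi_apply i)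
          rw [← ih fun i ↦ hf i.succ,
            ← lintegral_prod_mul (hf 0).aemeasurable hprod.aemeasurable]
        _ = ∏ i, ∫⁻ x, f i x ∂(μ i) := by rw [Fin.prod_univ_succ]

lemma lintegral_fintype_prod_eq_prod {ι : Type*} [Fintype ι] {E : Type*}
    {mE : MeasurableSpace E} {μ : ι → Measure E} [∀ i, SigmaFinite (μ i)] {f : ι → E → ℝ≥0∞}
    (hf : ∀ i, Measurable (f i)) :
    ∫⁻ x, ∏ i, f i (x i) ∂(Measure.pi μ) = ∏ i, ∫⁻ x, f i x ∂(μ i) := by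
  let e := (Fintype.equivFin ι).symm
  rw [← (measurePreserving_piCongrLeft _ e).lintegral_comp_emb
    (MeasurableEquiv.measurableEmbedding _)]
  simp_rw [← e.prod_comp, MeasurableEquiv.coe_piCongrLeft, Equiv.piCongrLeft_apply_apply]
  exact lintegral_fin_nat_prod_eq_prod fun i ↦ hf (e i)

lemma Measure.pi_withDensity {ι : Type*} [Fintype ι] {E : Type*} {mE : MeasurableSpace E}
    (μ : ι → Measure E) [∀ i, SigmaFinite (μ i)] {f : ι → E → ℝ≥0∞}
    (hf : ∀ i, Measurable (f i)) [∀ i, SigmaFinite ((μ i).withDensity (f i))] :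
    Measure.pi (fun i ↦ (μ i).withDensity (f i))
      = (Measure.pi μ).withDensity (fun x ↦ ∏ i, f i (x i)) := by
  refine Measure.pi_eq fun s hs ↦ ?_
  rw [withDensity_apply _ (MeasurableSet.univ_pi hs), Measure.restrict_pi_pi,
    lintegral_fintype_prod_eq_prod hf]
  simp_rw [withDensity_apply _ (hs _)]

end MeasureTheory

section TotalVariation

variable {α : Type*} [MeasurableSpace α]

lemma tvDist_le_of_forall_sub_le {P Q : Measure α} [IsProbabilityMeasure P]
    [IsProbabilityMeasure Q] {c : ℝ}
    (h : ∀ A, MeasurableSet A → (P A).toReal - (Q A).toReal ≤ c) : tvDist P Q ≤ c := by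
  refine ciSup_le fun ⟨A, hA⟩ ↦ abs_sub_le_iff.2 ⟨h A hA, ?_⟩
  have hcompl := h Aᶜ hA.compl
  simp only [← measureReal_def, probReal_compl_eq_one_sub hA] at hcompl ⊢
  linarith

lemma withDensity_apply_add_le {ν : Measure α} {f g : α → ℝ≥0∞} (hf : Measurable f)
    (hg : Measurable g) {S : Set α} (hfg : ∀ x ∉ S, f x ≤ g x) (hgf : ∀ x ∈ S, g x ≤ f x)
    (hS : MeasurableSet S) {A : Set α} (hA : MeasurableSet A) :
    ν.withDensity f A + ν.withDensity g S ≤ ν.withDensity g A + ν.withDensity f S := by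
  simp only [withDensity_apply _ hA, withDensity_apply _ hS, ← lintegral_indicator hA,
    ← lintegral_indicator hS]
  rw [← lintegral_add_left (hf.indicator hA), ← lintegral_add_left (hg.indicator hA)]
  refine lintegral_mono fun x ↦ ?_
  by_cases hxA : x ∈ A <;> by_cases hxS : x ∈ S <;>
    simp [Set.indicator_of_mem, Set.indicator_of_notMem, hxA, hxS, hfg, hgf, add_comm]

lemma tvDist_le_of_eq_withDensity {P Q ν : Measure α} [IsProbabilityMeasure P]
    [IsProbabilityMeasure Q] {f g : α → ℝ≥0∞} (hP : P = ν.withDensity f)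
    (hQ : Q = ν.withDensity g) (hf : Measurable f) (hg : Measurable g) {S : Set α}
    (hfg : ∀ x ∉ S, f x ≤ g x) (hgf : ∀ x ∈ S, g x ≤ f x) (hS : MeasurableSet S) :
    tvDist P Q ≤ (P S).toReal - (Q S).toReal := by
  refine tvDist_le_of_forall_sub_le fun A hA ↦ ?_
  have h := withDensity_apply_add_le (ν := ν) hf hg hfg hgf hS hA
  rw [← hP, ← hQ] at h
  have h' := ENNReal.toReal_mono (by finiteness) h
  rw [ENNReal.toReal_add (by finiteness) (by finiteness),
    ENNReal.toReal_add (by finiteness) (by finiteness)] at h'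
  linarith

end TotalVariation

namespace ProbabilityTheory

lemma gaussianPDFReal_le (m : ℝ) (v : ℝ≥0) (x : ℝ) : gaussianPDFReal m v x ≤ (√(2 * π * v))⁻¹ :=
  mul_le_of_le_one_right (by positivity) (exp_le_one_iff.2
    (div_nonpos_of_nonpos_of_nonneg (neg_nonpos.2 (sq_nonneg _)) (by positivity)))

lemma toReal_gaussianReal_Ioc_le (m : ℝ) {v : ℝ≥0} (hv : v ≠ 0) {a b : ℝ} (hab : a ≤ b) :
    (gaussianReal m v (Set.Ioc a b)).toReal ≤ (b - a) / √(2 * π * v) := by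
  rw [gaussianReal_apply_eq_integral _ hv, ENNReal.toReal_ofReal
    (setIntegral_nonneg measurableSet_Ioc fun x _ ↦ gaussianPDFReal_nonneg _ _ _)]
  calc ∫ x in Set.Ioc a b, gaussianPDFReal m v x
      ≤ ∫ _ in Set.Ioc a b, (√(2 * π * v))⁻¹ :=
        setIntegral_mono_on (integrable_gaussianPDFReal m v).integrableOn
          (integrableOn_const (by simp)) measurableSet_Ioc fun x _ ↦ gaussianPDFReal_le m v x
    _ = (b - a) / √(2 * π * v) := by simp [hab, div_eq_mul_inv]

lemma toReal_gaussianReal_Ioi_sub_le {m m' : ℝ} {v : ℝ≥0} (hv : v ≠ 0) (hm : m' ≤ m) (t : ℝ) :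
    (gaussianReal m v (Set.Ioi t)).toReal - (gaussianReal m' v (Set.Ioi t)).toReal
      ≤ (m - m') / √(2 * π * v) := by
  have hshift : gaussianReal m' v (Set.Ioi t) = gaussianReal m v (Set.Ioi (t + (m - m'))) := by
    rw [← add_sub_cancel m m', ← gaussianReal_map_add_const,
      Measure.map_apply (measurable_add_const _) measurableSet_Ioi, Set.preimage_add_const_Ioi]
    ring_nf
  have hsplit : gaussianReal m v (Set.Ioi t) = gaussianReal m v (Set.Ioc t (t + (m - m')))
      + gaussianReal m v (Set.Ioi (t + (m - m'))) := by
    rw [← measure_union (Set.Ioc_disjoint_Ioi le_rfl) measurableSet_Ioi,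
      Set.Ioc_union_Ioi_eq_Ioi (by linarith)]
  have hIoc := toReal_gaussianReal_Ioc_le m hv (show t ≤ t + (m - m') by linarith)
  rw [add_sub_cancel_left] at hIoc
  rw [hshift, hsplit, ENNReal.toReal_add (measure_ne_top _ _) (measure_ne_top _ _)]
  linarith

lemma toReal_gaussianReal_Ioi_sub_le_sqrt {m m' : ℝ} {v σ : ℝ≥0} (hσ : σ ≠ 0)
    (hv : (v : ℝ) = (m - m') * σ) (t : ℝ) :
    (gaussianReal m v (Set.Ioi t)).toReal - (gaussianReal m' v (Set.Ioi t)).toReal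
      ≤ √(m - m') / √(2 * π * σ) := by
  have hσ0 : (0 : ℝ) < σ := by positivity
  have hm : m' ≤ m := sub_nonneg.1 (nonneg_of_mul_nonneg_left (hv ▸ v.coe_nonneg) hσ0)
  rcases hm.eq_or_lt with rfl | hm
  · rw [sub_self]
    positivity
  have hv0 : v ≠ 0 := by
    rw [← NNReal.coe_ne_zero, hv]
    exact mul_ne_zero (sub_ne_zero.2 hm.ne') hσ0.ne'
  refine (toReal_gaussianReal_Ioi_sub_le hv0 hm.le t).trans_eq ?_
  rw [hv, show 2 * π * ((m - m') * σ) = (m - m') * (2 * π * σ) by ring,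
    sqrt_mul (sub_nonneg.2 hm.le), ← div_div, div_sqrt]

variable {ι : Type*} [Fintype ι]

lemma prod_gaussianPDFReal (m : ι → ℝ) (v : ℝ≥0) (x : ι → ℝ) :
    ∏ i, gaussianPDFReal (m i) v (x i)
      = (√(2 * π * v))⁻¹ ^ Fintype.card ι * rexp (-(∑ i, (x i - m i) ^ 2) / (2 * v)) := by
  simp only [gaussianPDFReal, Finset.prod_mul_distrib, Finset.prod_const, ← Real.exp_sum,
    ← Finset.sum_div, Finset.sum_neg_distrib, Finset.card_univ]

lemma prod_gaussianPDF_le_prod_gaussianPDF {m m' x : ι → ℝ} (v : ℝ≥0)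
    (h : ∑ i, (x i - m' i) ^ 2 ≤ ∑ i, (x i - m i) ^ 2) :
    ∏ i, gaussianPDF (m i) v (x i) ≤ ∏ i, gaussianPDF (m' i) v (x i) := by
  simp only [gaussianPDF, ← ENNReal.ofReal_prod_of_nonneg fun i _ ↦ gaussianPDFReal_nonneg _ _ _]
  refine ENNReal.ofReal_le_ofReal ?_
  rw [prod_gaussianPDFReal, prod_gaussianPDFReal]
  gcongr

lemma pi_gaussianReal_eq_withDensity (m : ι → ℝ) {v : ℝ≥0} (hv : v ≠ 0) :
    Measure.pi (fun i ↦ gaussianReal (m i) v)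
      = volume.withDensity (fun x : ι → ℝ ↦ ∏ i, gaussianPDF (m i) v (x i)) := by
  have (i : ι) : SigmaFinite (volume.withDensity (gaussianPDF (m i) v)) := by
    rw [← gaussianReal_of_var_ne_zero _ hv]
    infer_instance
  simp_rw [gaussianReal_of_var_ne_zero _ hv]
  exact Measure.pi_withDensity _ fun i ↦ measurable_gaussianPDF _ _

lemma map_sum_mul_pi_gaussianReal (c m : ι → ℝ) (v : ι → ℝ≥0) :
    (Measure.pi fun i ↦ gaussianReal (m i) (v i)).map (fun x ↦ ∑ i, c i * x i)
      = gaussianReal (∑ i, c i * m i) (∑ i, ‖c i‖₊ ^ 2 * v i) := by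
  have hT : Measurable fun x : ι → ℝ ↦ ∑ i, c i * x i := by fun_prop
  have := (Measure.pi fun i ↦ gaussianReal (m i) (v i)).isProbabilityMeasure_map hT.aemeasurable
  have hvar : ((∑ i, ‖c i‖₊ ^ 2 * v i : ℝ≥0) : ℝ) = ∑ i, c i ^ 2 * v i := by simp
  refine Measure.ext_of_charFun (funext fun t ↦ ?_)
  calc charFun _ t
      = ∫ x, ∏ i, Complex.exp (↑(t * c i) * ↑(x i) * Complex.I)
          ∂Measure.pi fun i ↦ gaussianReal (m i) (v i) := by
        rw [charFun_apply_real, integral_map hT.aemeasurable (by fun_prop)]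
        simp_rw [← Complex.exp_sum]
        push_cast
        simp_rw [Finset.mul_sum, Finset.sum_mul, mul_assoc]
    _ = ∏ i, charFun (gaussianReal (m i) (v i)) (t * c i) := by
        rw [integral_fintype_prod_eq_prod
          (fun i (y : ℝ) ↦ Complex.exp (↑(t * c i) * ↑y * Complex.I))]
        simp_rw [charFun_apply_real]
    _ = _ := by
        simp_rw [charFun_gaussianReal, ← Complex.exp_sum, hvar]
        push_cast
        simp only [← Finset.sum_sub_distrib, Finset.sum_mul, Finset.sum_div, Finset.mul_sum]
        exact congrArg Complex.exp (Finset.sum_congr rfl fun i _ ↦ by ring)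

end ProbabilityTheory

lemma sum_sq_sub_sub_sum_sq_sub {ι : Type*} [Fintype ι] (x a b : ι → ℝ) :
    ∑ i, (x i - a i) ^ 2 - ∑ i, (x i - b i) ^ 2
      = ∑ i, (a i - b i) * a i + ∑ i, (a i - b i) * b i - 2 * ∑ i, (a i - b i) * x i := by
  simp only [← Finset.sum_sub_distrib, Finset.mul_sum, ← Finset.sum_add_distrib]
  exact Finset.sum_congr rfl fun i _ ↦ by ring

/-- the total variation distance between `N(μ, σ²Iₙ)` and `N(μ′, σ²Iₙ)`
(products of one-dimensional Gaussians) is at most `‖μ − μ′‖₂ / √(2πσ²)`. -/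
theorem tv_gaussian_shift (n : ℕ) (μ μ' : Fin n → ℝ) (σ2 : ℝ≥0) (hσ2 : 0 < σ2) :
    tvDist (Measure.pi fun i => gaussianReal (μ i) σ2)
        (Measure.pi fun i => gaussianReal (μ' i) σ2)
      ≤ Real.sqrt (∑ i, (μ i - μ' i) ^ 2) / Real.sqrt (2 * Real.pi * σ2) := by
  set T : (Fin n → ℝ) → ℝ := fun x ↦ ∑ i, (μ i - μ' i) * x i
  set m₀ := ∑ i, (μ i - μ' i) * μ i
  set m₁ := ∑ i, (μ i - μ' i) * μ' i
  have hT : Measurable T := by fun_prop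
  have hT_lt_iff (x : Fin n → ℝ) :
      (m₀ + m₁) / 2 < T x ↔ ∑ i, (x i - μ i) ^ 2 < ∑ i, (x i - μ' i) ^ 2 := by
    have := sum_sq_sub_sub_sum_sq_sub x μ μ'
    constructor <;> intro h <;> linarith
  have hv : σ2 ≠ 0 := hσ2.ne'
  refine (tvDist_le_of_eq_withDensity (pi_gaussianReal_eq_withDensity μ hv)
    (pi_gaussianReal_eq_withDensity μ' hv) (S := T ⁻¹' Set.Ioi ((m₀ + m₁) / 2))
    (by fun_prop) (by fun_prop)
    (fun x hx ↦ prod_gaussianPDF_le_prod_gaussianPDF σ2 (not_lt.1 fun h ↦ hx ((hT_lt_iff x).2 h)))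
    (fun x hx ↦ prod_gaussianPDF_le_prod_gaussianPDF σ2 ((hT_lt_iff x).1 hx).le)
    (hT measurableSet_Ioi)).trans ?_
  rw [← Measure.map_apply hT measurableSet_Ioi, ← Measure.map_apply hT measurableSet_Ioi,
    map_sum_mul_pi_gaussianReal, map_sum_mul_pi_gaussianReal]
  have hm : m₀ - m₁ = ∑ i, (μ i - μ' i) ^ 2 := by
    simp only [m₀, m₁, ← Finset.sum_sub_distrib]
    exact Finset.sum_congr rfl fun i _ ↦ by ring
  change (gaussianReal m₀ _ _).toReal - (gaussianReal m₁ _ _).toReal ≤ _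
  rw [← hm]
  exact toReal_gaussianReal_Ioi_sub_le_sqrt hv (by rw [hm]; simp [Finset.sum_mul]) _
end
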